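/- Let P, Q ∈ ℤ, p a prime with p ∤ Q, and let (F_n) be the Lucas sequence for f(t) = t² - Pt + Q. The rank r(p) (least positive n with p | F_n) equals the order of the class of (0,1) in the group G_{𝔽_p}(f) = (𝔽_p[t]/(f))^×/𝔽_p^×, where (a₁,a₀) corresponds to a₁ - a₀t; i.e., r(p) is the multiplicative order of the class of -t in (𝔽_p[t]/(f(t)))^×/𝔽_p^×. -/

import Mathlib

set_option maxHeartbeats 1000000
set_option synthInstance.maxHeartbeats 400000

open Polynomial

/-- Every subgroup of the unit group of a commutative polynomial quotient ring is normal
(helper instance to make quotient groups elaborate). -/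
instance polyQuotSubgroupNormal (R : Type*) [CommRing R] (I : Ideal (Polynomial R))
    (S : Subgroup (Polynomial R ⧸ I)ˣ) : S.Normal :=
  ⟨fun n hn g => by rw [mul_comm g n, mul_inv_cancel_right]; exact hn⟩

/-- The quotient ring `𝔽_p[t]/(t² - Pt + Q)`. -/
abbrev LaxtonRing (p : ℕ) (P Q : ZMod p) : Type :=
  Polynomial (ZMod p) ⧸ Ideal.span {(X : (ZMod p)[X]) ^ 2 - C P * X + C Q}

/-- The subgroup of scalars: the range of `R^× → A^×` induced by the algebra map. -/
def scalarUnits (R A : Type*) [CommRing R] [CommRing A] [Algebra R A] :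
    Subgroup Aˣ :=
  (Units.map (algebraMap R A).toMonoidHom).range

/-- The group `G_{𝔽_p}(f) = (𝔽_p[t]/(f))^×/𝔽_p^×`. -/
abbrev LaxtonGroupFp (p : ℕ) (P Q : ZMod p) : Type :=
  (LaxtonRing p P Q)ˣ ⧸ scalarUnits (ZMod p) (LaxtonRing p P Q)

/-!
In `K[t]/(t² - at + b)` the Lucas recurrence `G (n + 2) = a G (n + 1) - b G n` is the reduction
rule for powers of `t`: `t ^ n = G n t - b G (n - 1)`. Since `1, t` are linearly independent
there, `t ^ n` is a scalar exactly when `G n = 0`, and `-t` differs from `t` by the scalar `-1`.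
So in the finite group `(𝔽_p[t]/(f))ˣ / 𝔽_pˣ` the trivial powers of the class of `-t` are
exactly those with `p ∣ F n`, and its order is the least positive such `n`.
-/

theorem Polynomial.monic_X_sq_sub_C_mul_X_add_C {R : Type*} [CommRing R] (a b : R) :
    ((X : R[X]) ^ 2 - C a * X + C b).Monic := by
  monicity!

theorem Polynomial.natDegree_X_sq_sub_C_mul_X_add_C {R : Type*} [CommRing R] [Nontrivial R]
    (a b : R) : ((X : R[X]) ^ 2 - C a * X + C b).natDegree = 2 := by
  compute_degree!

theorem neg_one_mem_scalarUnits (R A : Type*) [CommRing R] [CommRing A] [Algebra R A] :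
    -1 ∈ scalarUnits R A :=
  ⟨-1, by simp⟩

theorem QuotientGroup.mk_neg_scalarUnits {R A : Type*} [CommRing R] [CommRing A] [Algebra R A]
    (v : Aˣ) : (QuotientGroup.mk (-v) : Aˣ ⧸ scalarUnits R A) = QuotientGroup.mk v :=
  QuotientGroup.eq.mpr (by simpa using neg_one_mem_scalarUnits R A)

theorem mem_scalarUnits_iff {K A : Type*} [Field K] [CommRing A] [Nontrivial A] [Algebra K A]
    {v : Aˣ} : v ∈ scalarUnits K A ↔ ∃ c : K, algebraMap K A c = v := by
  refine ⟨fun ⟨c, hc⟩ => ⟨c, congrArg Units.val hc⟩, fun ⟨c, hc⟩ => ?_⟩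
  have hc0 : c ≠ 0 := by
    rintro rfl
    exact v.ne_zero (by rw [← hc, map_zero])
  exact ⟨Units.mk0 c hc0, Units.ext hc⟩

abbrev QuadraticQuotient (K : Type*) [CommRing K] (a b : K) : Type _ :=
  K[X] ⧸ Ideal.span {(X : K[X]) ^ 2 - C a * X + C b}

namespace QuadraticQuotient

section CommRing

variable {K : Type*} [CommRing K] (a b : K)

theorem algebraMap_apply (c : K) :
    algebraMap K (QuadraticQuotient K a b) c = Ideal.Quotient.mk _ (C c) :=
  rfl

theorem mk_X_pow_succ {G : ℕ → K} (hG0 : G 0 = 0) (hG1 : G 1 = 1)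
    (hrec : ∀ n, G (n + 2) = a * G (n + 1) - b * G n) (n : ℕ) :
    (Ideal.Quotient.mk _ X : QuadraticQuotient K a b) ^ (n + 1) =
      Ideal.Quotient.mk _ (C (G (n + 1)) * X - C (b * G n)) := by
  induction n with
  | zero => rw [hG1, hG0, mul_zero, map_zero, map_one, one_mul, sub_zero, pow_one]
  | succ n ih =>
    rw [pow_succ _ (n + 1), ih, ← map_mul, Ideal.Quotient.eq, Ideal.mem_span_singleton, hrec]
    exact ⟨C (G (n + 1)), by simp only [map_sub, map_mul]; ring⟩

variable [Nontrivial K]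

instance : Nontrivial (QuadraticQuotient K a b) := by
  refine Ideal.Quotient.nontrivial_iff.mpr (Ideal.span_singleton_ne_top fun h => ?_)
  have := congrArg Polynomial.natDegree ((monic_X_sq_sub_C_mul_X_add_C a b).isUnit_iff.mp h)
  rw [natDegree_X_sq_sub_C_mul_X_add_C, natDegree_one] at this
  exact two_ne_zero this

instance [Finite K] : Finite (QuadraticQuotient K a b) :=
  have := (monic_X_sq_sub_C_mul_X_add_C a b).finite_quotient
  Module.finite_of_finite K

theorem mk_C_mul_X_add_C_eq_zero {c d : K}
    (h : (Ideal.Quotient.mk _ (C c * X + C d) : QuadraticQuotient K a b) = 0) :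
    c = 0 ∧ d = 0 := by
  rw [Ideal.Quotient.eq_zero_iff_mem, Ideal.mem_span_singleton] at h
  have hlin : C c * X + C d = 0 := by
    by_contra hne
    refine (monic_X_sq_sub_C_mul_X_add_C a b).not_dvd_of_natDegree_lt hne ?_ h
    rw [natDegree_X_sq_sub_C_mul_X_add_C]
    exact natDegree_linear_le.trans_lt one_lt_two
  exact ⟨by simpa using congrArg (coeff · 1) hlin, by simpa using congrArg (coeff · 0) hlin⟩

end CommRing

section Field

variable {K : Type*} [Field K] (a b : K)

theorem pow_mem_scalarUnits_iff {G : ℕ → K} (hG0 : G 0 = 0) (hG1 : G 1 = 1)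
    (hrec : ∀ n, G (n + 2) = a * G (n + 1) - b * G n) {v : (QuadraticQuotient K a b)ˣ}
    (hv : (v : QuadraticQuotient K a b) = Ideal.Quotient.mk _ X) (n : ℕ) :
    v ^ n ∈ scalarUnits K (QuadraticQuotient K a b) ↔ G n = 0 := by
  cases n with
  | zero => simp [hG0, one_mem]
  | succ m =>
    rw [mem_scalarUnits_iff, Units.val_pow_eq_pow_val, hv, mk_X_pow_succ a b hG0 hG1 hrec]
    refine ⟨fun ⟨c, hc⟩ => ?_, fun h => ⟨-(b * G m), ?_⟩⟩
    · refine (mk_C_mul_X_add_C_eq_zero a b (d := -(b * G m) - c) ?_).1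
      rw [← sub_eq_zero.mpr hc.symm, algebraMap_apply, ← map_sub]
      congr 1
      simp only [map_sub, map_neg]
      ring
    · rw [algebraMap_apply, h]
      simp

end Field

end QuadraticQuotient

theorem IsOfFinOrder.isLeast_orderOf {G : Type*} [Monoid G] {g : G} (hg : IsOfFinOrder g) :
    IsLeast {n | 0 < n ∧ g ^ n = 1} (orderOf g) :=
  ⟨⟨hg.orderOf_pos, pow_orderOf_eq_one g⟩, fun _ ⟨hn, h⟩ => orderOf_le_of_pow_eq_one hn h⟩

theorem laxton_stmt18_general (p : ℕ) [Fact p.Prime] (P Q : ℤ)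
    (F : ℕ → ℤ) (h0 : F 0 = 0) (h1 : F 1 = 1)
    (hrec : ∀ n : ℕ, F (n + 2) = P * F (n + 1) - Q * F n)
    (u : (LaxtonRing p (P : ZMod p) (Q : ZMod p))ˣ)
    (hu : (u : LaxtonRing p (P : ZMod p) (Q : ZMod p)) = Ideal.Quotient.mk _ (-X)) :
    IsLeast {n : ℕ | 0 < n ∧ (p : ℤ) ∣ F n}
      (orderOf (QuotientGroup.mk u : LaxtonGroupFp p (P : ZMod p) (Q : ZMod p))) := by
  have hX : ((-u : (LaxtonRing p P Q)ˣ) : LaxtonRing p P Q) = Ideal.Quotient.mk _ X := by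
    rw [Units.val_neg, hu, map_neg, neg_neg]
  have key (n : ℕ) :
      (QuotientGroup.mk u : LaxtonGroupFp p P Q) ^ n = 1 ↔ (p : ℤ) ∣ F n := by
    rw [← QuotientGroup.mk_neg_scalarUnits, ← QuotientGroup.mk_pow, QuotientGroup.eq_one_iff,
      QuadraticQuotient.pow_mem_scalarUnits_iff (P : ZMod p) Q (G := fun n => (F n : ZMod p))
        (by simp [h0]) (by simp [h1]) (fun n => by simp [hrec]) hX,
      ZMod.intCast_zmod_eq_zero_iff_dvd]
  simpa only [key] using
    (isOfFinOrder_of_finite (QuotientGroup.mk u : LaxtonGroupFp p P Q)).isLeast_orderOf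

/-- The rank `r(p)` of the Lucas sequence (least positive `n` with `p ∣ F n`) equals
the multiplicative order of the class of `-t` (i.e. of `(0,1)`) in
`G_{𝔽_p}(f) = (𝔽_p[t]/(f))^×/𝔽_p^×`. -/
theorem laxton_stmt18 (p : ℕ) [Fact p.Prime] (P Q : ℤ) (hQ : (Q : ZMod p) ≠ 0)
    (F : ℕ → ℤ) (h0 : F 0 = 0) (h1 : F 1 = 1)
    (hrec : ∀ n : ℕ, F (n + 2) = P * F (n + 1) - Q * F n)
    (u : (LaxtonRing p (P : ZMod p) (Q : ZMod p))ˣ)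
    (hu : (u : LaxtonRing p (P : ZMod p) (Q : ZMod p)) = Ideal.Quotient.mk _ (-X)) :
    IsLeast {n : ℕ | 0 < n ∧ (p : ℤ) ∣ F n}
      (orderOf (QuotientGroup.mk u : LaxtonGroupFp p (P : ZMod p) (Q : ZMod p))) :=
  laxton_stmt18_general p P Q F h0 h1 hrec u hu
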